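/- For a combinatorial hypermap (σ, α) on darts B = {1,...,n} with vertices V = orbits of σ, edges E = orbits of α, faces F = orbits of α^{−1}σ, the F_2 hypermap homology spaces satisfy dim H_0 = 1, dim H_2 = 1, and dim H_1 = n + 2 − |V| − |E| − |F|. -/

import Mathlib

/-!
A function on vertices (or on faces) whose pull-back to the darts is invariant under `σ` and `α`
is constant, by transitivity. Over `𝔽₂`, `φ ∈ ker d₁ᵀ` says `φ(v ∋ i) = φ(v ∋ α⁻¹ i)`, and
`f ∈ ker ∂₂` says that `f(face ∋ i)` depends only on the edge of `i`; so both kernels are spanned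
by the all-ones vector. Hence `rank d₁ = |V| - 1` (so `dim H₀ = 1`), `dim H₂ = 1` and
`rank ∂₂ = |F| - 1`. The edges are disjoint, so `ι` is injective and `dim W/ι(E) = n - |E|`;
rank–nullity then gives `dim H₁ = (n - |E| - (|V| - 1)) - (|F| - 1)`.
-/

open Matrix

section Hypermap

variable (n : ℕ)

/-- The set of orbits of a permutation `σ` of the darts `B = Fin n`; for a hypermap
`(σ, α)` the orbits of `σ` are the vertices, those of `α` the edges, and those of
the face permutation the faces. -/
abbrev orbQ (σ : Equiv.Perm (Fin n)) : Type :=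
  Quotient (MulAction.orbitRel (Subgroup.zpowers σ) (Fin n))

noncomputable instance (σ : Equiv.Perm (Fin n)) : Fintype (orbQ n σ) :=
  Fintype.ofFinite _

/-- The orbit (vertex/edge/face) containing a given dart. -/
abbrev cls (σ : Equiv.Perm (Fin n)) (i : Fin n) : orbQ n σ :=
  Quotient.mk (MulAction.orbitRel (Subgroup.zpowers σ) (Fin n)) i

open Classical in
/-- Matrix of `d_1 : W → 𝒱`, `w_i ↦ v_{∋i} + v_{∋α⁻¹(i)}`. -/
noncomputable def d1mat (σ α : Equiv.Perm (Fin n)) :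
    Matrix (orbQ n σ) (Fin n) (ZMod 2) :=
  Matrix.of fun q i =>
    (if cls n σ i = q then 1 else 0) + (if cls n σ (α⁻¹ i) = q then 1 else 0)

open Classical in
/-- Matrix of `ι : ℰ → W`, `e ↦ ∑_{i ∈ e} w_i`. -/
noncomputable def iotaMat (α : Equiv.Perm (Fin n)) :
    Matrix (Fin n) (orbQ n α) (ZMod 2) :=
  Matrix.of fun i e => if cls n α i = e then 1 else 0

open Classical in
/-- Matrix of `d_2 : ℱ → W`, `f ↦ ∑_{i ∈ f} w_i`; here the face permutation
`α⁻¹σ` (multiplying left to right) is `σ ∘ α⁻¹ = σ * α⁻¹` in Lean's convention. -/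
noncomputable def d2mat (σ α : Equiv.Perm (Fin n)) :
    Matrix (Fin n) (orbQ n (σ * α⁻¹)) (ZMod 2) :=
  Matrix.of fun i f => if cls n (σ * α⁻¹) i = f then 1 else 0

end Hypermap

section Transitivity

variable {G X β : Type*} [Group G] [MulAction G X]

theorem apply_eq_of_forall_mem_closure {s : Set G} {T : X → β}
    (hT : ∀ g ∈ s, ∀ x : X, T (g • x) = T x) {g : G} (hg : g ∈ Subgroup.closure s) (x : X) :
    T (g • x) = T x := by
  induction hg using Subgroup.closure_induction generalizing x with
  | mem g hg => exact hT g hg x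
  | one => rw [one_smul]
  | mul g h _ _ ihg ihh => rw [mul_smul, ihg, ihh]
  | inv g _ ih => rw [← ih (g⁻¹ • x), smul_inv_smul]

theorem eq_of_forall_smul_eq_of_isPretransitive {s : Set G}
    [MulAction.IsPretransitive (Subgroup.closure s) X] {T : X → β}
    (hT : ∀ g ∈ s, ∀ x : X, T (g • x) = T x) (x y : X) : T x = T y := by
  obtain ⟨⟨g, hg⟩, rfl⟩ := MulAction.exists_smul_eq (Subgroup.closure s) x y
  exact (apply_eq_of_forall_mem_closure hT hg x).symm

end Transitivity

theorem mem_span_one_of_forall_eq {ι K : Type*} [Field K] {φ : ι → K}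
    (h : ∀ i j, φ i = φ j) : φ ∈ K ∙ (1 : ι → K) := by
  rcases isEmpty_or_nonempty ι with _ | ⟨⟨i₀⟩⟩
  · rw [Subsingleton.elim φ 0]
    exact Submodule.zero_mem _
  · exact Submodule.mem_span_singleton.2 ⟨φ i₀, funext fun i => by simp [h i₀ i]⟩

theorem finrank_homology_add_finrank_range {K U V W : Type*} [Field K]
    [AddCommGroup U] [Module K U] [AddCommGroup V] [Module K V] [FiniteDimensional K V]
    [AddCommGroup W] [Module K W] {f : U →ₗ[K] V} {g : V →ₗ[K] W}
    (hfg : LinearMap.range f ≤ LinearMap.ker g) :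
    Module.finrank K (LinearMap.ker g ⧸ (LinearMap.range f).comap (LinearMap.ker g).subtype)
      + Module.finrank K (LinearMap.range f) = Module.finrank K (LinearMap.ker g) := by
  rw [← (Submodule.comapSubtypeEquivOfLe hfg).finrank_eq]
  exact Submodule.finrank_quotient_add_finrank _

section HypermapMatrices

variable {n : ℕ}

theorem cls_surjective (τ : Equiv.Perm (Fin n)) : Function.Surjective (cls n τ) :=
  Quotient.mk_surjective

theorem cls_apply_self (τ : Equiv.Perm (Fin n)) (i : Fin n) : cls n τ (τ i) = cls n τ i :=
  Quotient.sound ⟨⟨τ, Subgroup.mem_zpowers τ⟩, rfl⟩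

instance [Nonempty (Fin n)] (τ : Equiv.Perm (Fin n)) : Nonempty (orbQ n τ) :=
  .map (cls n τ) ‹_›

theorem iotaMat_mulVec_apply (α : Equiv.Perm (Fin n)) (c : orbQ n α → ZMod 2) (i : Fin n) :
    (iotaMat n α *ᵥ c) i = c (cls n α i) := by
  simp [iotaMat, Matrix.mulVec, dotProduct]

theorem d2mat_mulVec_apply (σ α : Equiv.Perm (Fin n)) (f : orbQ n (σ * α⁻¹) → ZMod 2)
    (i : Fin n) : (d2mat n σ α *ᵥ f) i = f (cls n (σ * α⁻¹) i) := by
  simp [d2mat, Matrix.mulVec, dotProduct]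

theorem d1mat_transpose_mulVec_apply (σ α : Equiv.Perm (Fin n)) (φ : orbQ n σ → ZMod 2)
    (i : Fin n) : ((d1mat n σ α)ᵀ *ᵥ φ) i = φ (cls n σ i) + φ (cls n σ (α⁻¹ i)) := by
  simp [d1mat, Matrix.mulVec, dotProduct, add_mul, Finset.sum_add_distrib]

open Classical in
theorem d1mat_mulVec_apply (σ α : Equiv.Perm (Fin n)) (w : Fin n → ZMod 2) (q : orbQ n σ) :
    (d1mat n σ α *ᵥ w) q = ∑ i, if cls n σ i = q then w (σ i) + w (α i) else 0 := by
  simp only [d1mat, Matrix.mulVec, dotProduct, Matrix.of_apply, add_mul, ite_mul, one_mul,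
    zero_mul, Finset.sum_add_distrib, ite_add_zero]
  congr 1
  · exact (Equiv.sum_comp σ _).symm.trans (by simp only [cls_apply_self])
  · exact (Equiv.sum_comp α _).symm.trans (by simp)

theorem d1mat_mulVec_d2mat_mulVec (σ α : Equiv.Perm (Fin n)) (f : orbQ n (σ * α⁻¹) → ZMod 2) :
    d1mat n σ α *ᵥ (d2mat n σ α *ᵥ f) = 0 := by
  funext q
  rw [d1mat_mulVec_apply]
  refine Finset.sum_eq_zero fun i _ => ?_
  have hface : σ i = (σ * α⁻¹) (α i) := by simp
  rw [d2mat_mulVec_apply, d2mat_mulVec_apply, hface, cls_apply_self, CharTwo.add_self_eq_zero,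
    ite_self]

theorem finrank_quotient_range_iotaMat_add_card (α : Equiv.Perm (Fin n)) :
    Module.finrank (ZMod 2) ((Fin n → ZMod 2) ⧸ LinearMap.range (iotaMat n α).mulVecLin)
      + Fintype.card (orbQ n α) = n := by
  have hinj : Function.Injective (iotaMat n α).mulVecLin := fun c c' h => funext fun e => by
    obtain ⟨i, rfl⟩ := cls_surjective α e
    simpa [iotaMat_mulVec_apply] using congrFun h i
  have h := (LinearMap.range (iotaMat n α).mulVecLin).finrank_quotient_add_finrank
  rwa [LinearMap.finrank_range_of_inj hinj, Module.finrank_fintype_fun_eq_card,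
    Module.finrank_fintype_fun_eq_card, Fintype.card_fin] at h

end HypermapMatrices

section TransitiveHypermap

variable {n : ℕ} {σ α : Equiv.Perm (Fin n)}
  [MulAction.IsPretransitive (Subgroup.closure ({σ, α} : Set (Equiv.Perm (Fin n)))) (Fin n)]

theorem mem_span_one_of_invariant {τ : Equiv.Perm (Fin n)} {φ : orbQ n τ → ZMod 2}
    (hσ : ∀ i, φ (cls n τ (σ i)) = φ (cls n τ i))
    (hα : ∀ i, φ (cls n τ (α i)) = φ (cls n τ i)) : φ ∈ ZMod 2 ∙ 1 := by
  refine mem_span_one_of_forall_eq fun p q => ?_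
  obtain ⟨i, rfl⟩ := cls_surjective τ p
  obtain ⟨j, rfl⟩ := cls_surjective τ q
  refine eq_of_forall_smul_eq_of_isPretransitive (s := {σ, α})
    (T := fun i => φ (cls n τ i)) ?_ i j
  rintro g (rfl | rfl) x
  exacts [hσ x, hα x]

variable (σ α) in
theorem ker_d1mat_transpose :
    LinearMap.ker (d1mat n σ α)ᵀ.mulVecLin = ZMod 2 ∙ 1 := by
  apply le_antisymm
  · intro φ hφ
    have hα : ∀ i, φ (cls n σ (α⁻¹ i)) = φ (cls n σ i) := fun i => by
      have h := congrFun (LinearMap.mem_ker.1 hφ) i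
      rw [Matrix.mulVecLin_apply, d1mat_transpose_mulVec_apply] at h
      exact (CharTwo.add_eq_zero.1 h).symm
    refine mem_span_one_of_invariant (α := α) (fun i => by rw [cls_apply_self]) fun i => ?_
    simpa using (hα (α i)).symm
  · rw [Submodule.span_singleton_le_iff_mem, LinearMap.mem_ker]
    funext i
    rw [Matrix.mulVecLin_apply, d1mat_transpose_mulVec_apply]
    exact CharTwo.add_self_eq_zero 1

variable (σ α) in
theorem rank_d1mat_add_one [Nonempty (Fin n)] :
    (d1mat n σ α).rank + 1 = Fintype.card (orbQ n σ) := by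
  have h := LinearMap.finrank_range_add_finrank_ker (d1mat n σ α)ᵀ.mulVecLin
  rwa [ker_d1mat_transpose, finrank_span_singleton one_ne_zero,
    Module.finrank_fintype_fun_eq_card, ← Matrix.rank, Matrix.rank_transpose] at h

theorem d2mat_mulVec_mem_range_iotaMat_iff (f : orbQ n (σ * α⁻¹) → ZMod 2) :
    d2mat n σ α *ᵥ f ∈ LinearMap.range (iotaMat n α).mulVecLin ↔ f ∈ ZMod 2 ∙ 1 := by
  constructor
  · rintro ⟨c, hc⟩
    have hedge : ∀ i, f (cls n (σ * α⁻¹) i) = c (cls n α i) := fun i => by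
      simpa [iotaMat_mulVec_apply, d2mat_mulVec_apply] using (congrFun hc i).symm
    have hα : ∀ i, f (cls n (σ * α⁻¹) (α i)) = f (cls n (σ * α⁻¹) i) := fun i => by
      rw [hedge, hedge, cls_apply_self]
    refine mem_span_one_of_invariant (σ := σ) (fun i => ?_) hα
    have hface : σ i = (σ * α⁻¹) (α i) := by simp
    rw [hface, cls_apply_self, hα]
  · intro hf
    obtain ⟨a, rfl⟩ := Submodule.mem_span_singleton.1 hf
    refine ⟨fun _ => a, funext fun i => ?_⟩
    simp [iotaMat_mulVec_apply, d2mat_mulVec_apply]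

end TransitiveHypermap

/-- For a combinatorial hypermap `(σ, α)` on darts `B = {1, …, n}`, with vertices,
edges and faces the orbits of `σ`, `α` and `α⁻¹σ`, the `F_2` hypermap homology
`ℱ --∂₂--> W/ι(ℰ) --∂₁--> 𝒱` satisfies `dim H_0 = 1`, `dim H_2 = 1`, and
`dim H_1 = n + 2 − |V| − |E| − |F|`. -/
theorem hypermap_homology_dims (n : ℕ) (hn : 0 < n)
    (σ α : Equiv.Perm (Fin n))
    (htrans : ∀ i j : Fin n,
      ∃ g ∈ Subgroup.closure ({σ, α} : Set (Equiv.Perm (Fin n))), g i = j)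
    (bd1 : ((Fin n → ZMod 2) ⧸ LinearMap.range (iotaMat n α).mulVecLin)
            →ₗ[ZMod 2] (orbQ n σ → ZMod 2))
    (hbd1 : ∀ w : Fin n → ZMod 2,
      bd1 (Submodule.Quotient.mk w) = (d1mat n σ α).mulVecLin w)
    (bd2 : (orbQ n (σ * α⁻¹) → ZMod 2)
            →ₗ[ZMod 2] ((Fin n → ZMod 2) ⧸ LinearMap.range (iotaMat n α).mulVecLin))
    (hbd2 : ∀ f : orbQ n (σ * α⁻¹) → ZMod 2,
      bd2 f = Submodule.Quotient.mk ((d2mat n σ α).mulVecLin f)) :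
    Module.finrank (ZMod 2) ((orbQ n σ → ZMod 2) ⧸ LinearMap.range bd1) = 1 ∧
    Module.finrank (ZMod 2) (LinearMap.ker bd2) = 1 ∧
    Module.finrank (ZMod 2)
        ((LinearMap.ker bd1) ⧸
          (LinearMap.range bd2).comap (LinearMap.ker bd1).subtype) =
      n + 2 - Fintype.card (orbQ n σ) - Fintype.card (orbQ n α)
        - Fintype.card (orbQ n (σ * α⁻¹)) := by
  have : MulAction.IsPretransitive
      (Subgroup.closure ({σ, α} : Set (Equiv.Perm (Fin n)))) (Fin n) :=
    ⟨fun i j => (htrans i j).elim fun g ⟨hg, hgij⟩ => ⟨⟨g, hg⟩, hgij⟩⟩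
  have : Nonempty (Fin n) := ⟨⟨0, hn⟩⟩
  have hrange1 : LinearMap.range bd1 = LinearMap.range (d1mat n σ α).mulVecLin := by
    rw [← LinearMap.range_comp_of_range_eq_top bd1 (Submodule.range_mkQ _)]
    exact congrArg LinearMap.range (LinearMap.ext hbd1)
  have hker2 : LinearMap.ker bd2 = ZMod 2 ∙ 1 := by
    ext f
    rw [LinearMap.mem_ker, hbd2, Submodule.Quotient.mk_eq_zero, Matrix.mulVecLin_apply]
    exact d2mat_mulVec_mem_range_iotaMat_iff f
  have hH2 : Module.finrank (ZMod 2) (LinearMap.ker bd2) = 1 := by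
    rw [hker2]
    exact finrank_span_singleton one_ne_zero
  have hcomplex : LinearMap.range bd2 ≤ LinearMap.ker bd1 := by
    rintro _ ⟨f, rfl⟩
    rw [LinearMap.mem_ker, hbd2, hbd1, Matrix.mulVecLin_apply, Matrix.mulVecLin_apply,
      d1mat_mulVec_d2mat_mulVec]
  have hV := rank_d1mat_add_one σ α
  have hW := finrank_quotient_range_iotaMat_add_card α
  have hH0 := (LinearMap.range bd1).finrank_quotient_add_finrank
  have hH1 := finrank_homology_add_finrank_range hcomplex
  have hrk1 := bd1.finrank_range_add_finrank_ker
  have hrk2 := bd2.finrank_range_add_finrank_ker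
  rw [hrange1] at hH0 hrk1 ⊢
  rw [hH2] at hrk2
  simp only [Matrix.rank, Module.finrank_fintype_fun_eq_card] at hV hH0 hrk2
  exact ⟨by omega, hH2, by omega⟩
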